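/- arXiv:math/0703587 — 2 statements merged into one kernel-verified Lean document; each statement's English description precedes it below -/
import Mathlib

section
/- Let b : (S¹×S¹)⁴ → ℝ be any alternating, H-invariant (for the twisted orientation-sign action) bounded function, and let x₀,…,x₄ and y₀,…,y₄ be positively cyclically ordered points of S¹. Then the simplicial coboundary δb vanishes on the 5-tuple w = ((x₀,y₀),(x₁,y₂),(x₂,y₄),(x₃,y₁),(x₄,y₃)): δb(w) = Σ_{i=0}^{4} (−1)ⁱ b(ŵⁱ) = 0, where ŵⁱ omits the i-th coordinate. Consequently ‖Θ + δb‖_∞ ≥ 2/3 for every such b, and the seminorm of the bounded cohomology class of Θ equals 2/3. -/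
open scoped BigOperators

/-- Orientation cocycle on the circle: +1 for positively oriented (counterclockwise)
triples of distinct points, -1 for negatively oriented triples, 0 if two coincide. -/
noncomputable def orient (a b c : Circle) : ℝ :=
  Real.sign (((starRingEnd ℂ) ((b : ℂ) - (a : ℂ)) * ((c : ℂ) - (a : ℂ))).im)

/-- `x 0, …, x (n-1)` are positively cyclically ordered according to their numbering. -/
def PosCyclicallyOrdered {n : ℕ} (x : Fin n → Circle) : Prop :=
  ∀ i j k : Fin n, i < j → j < k → orient (x i) (x j) (x k) = 1

/-- Θ = Alt(Or₁ ∪ Or₂). -/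
noncomputable def Theta (z : Fin 5 → Circle × Circle) : ℝ :=
  (1 / 120) * ∑ σ : Equiv.Perm (Fin 5),
    ((Equiv.Perm.sign σ : ℤ) : ℝ) *
      (orient (z (σ 0)).1 (z (σ 1)).1 (z (σ 2)).1 *
        orient (z (σ 2)).2 (z (σ 3)).2 (z (σ 4)).2)


/-- An isometry of the hyperbolic plane in the Poincaré disk model: the Möbius
transformation `z ↦ (a z + b)/(b̄ z + ā)` with `|a|² - |b|² = 1` (orientation
preserving when `pres = true`), precomposed with complex conjugation when
`pres = false` (orientation reversing). -/
structure DiskIsom where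
  a : ℂ
  b : ℂ
  hnorm : Complex.normSq a - Complex.normSq b = 1
  pres : Bool

namespace DiskIsom

/-- The action on the (closed) disk and its boundary circle. -/
noncomputable def apply (g : DiskIsom) (z : ℂ) : ℂ :=
  (g.a * (if g.pres then z else (starRingEnd ℂ) z) + g.b) /
    ((starRingEnd ℂ) g.b * (if g.pres then z else (starRingEnd ℂ) z) + (starRingEnd ℂ) g.a)

/-- The boundary action on the circle `S¹ = ∂ℍ²`. -/
noncomputable def applyS (g : DiskIsom) (x : Circle) : Circle :=
  Circle.exp (Complex.arg (g.apply (x : ℂ)))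

/-- The orientation sign of an isometry. -/
noncomputable def sgn (g : DiskIsom) : ℝ := if g.pres then 1 else -1

/-- The inverse isometry. -/
noncomputable def inv (g : DiskIsom) : DiskIsom where
  a := if g.pres then (starRingEnd ℂ) g.a else g.a
  b := -g.b
  hnorm := by
    rcases g.pres with _ | _ <;>
      simp [Complex.normSq_conj, g.hnorm]
  pres := g.pres

end DiskIsom

/-- The geodesic of the hyperbolic plane (Poincaré disk model) with ideal
endpoints `u, v ∈ S¹`, as a subset of the open unit disk in `ℂ`. -/
def geodesic (u v : Circle) : Set ℂ :=
  {z | ‖z‖ < 1 ∧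
    (1 + Complex.normSq z) * ((u : ℂ) + (v : ℂ)) - 2 * z
      - 2 * (u : ℂ) * (v : ℂ) * (starRingEnd ℂ) z = 0}

/-- A cochain is alternating. -/
def Alternating {n : ℕ} {X : Type*} (f : (Fin n → X) → ℝ) : Prop :=
  ∀ (σ : Equiv.Perm (Fin n)) (z : Fin n → X),
    f (fun i => z (σ i)) = ((Equiv.Perm.sign σ : ℤ) : ℝ) * f z

/-- Invariance of a cochain on `(S¹ × S¹)^n` under the twisted (orientation-sign)
action of `H = Isom(ℍ² × ℍ²)`, expressed on the generators: pairs of isometries of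
`ℍ²` acting factorwise through their boundary action, and the factor swap. -/
def HInvariant {n : ℕ} (f : (Fin n → Circle × Circle) → ℝ) : Prop :=
  (∀ (g h : DiskIsom) (z : Fin n → Circle × Circle),
      f (fun i => (g.applyS (z i).1, h.applyS (z i).2)) = g.sgn * h.sgn * f z) ∧
  (∀ z : Fin n → Circle × Circle, f (fun i => ((z i).2, (z i).1)) = f z)

/-- The simplicial coboundary of a cochain. -/
noncomputable def cobdry {n : ℕ} {X : Type*} (f : (Fin (n + 1) → X) → ℝ) :
    (Fin (n + 2) → X) → ℝ :=
  fun z => ∑ i : Fin (n + 2), (-1 : ℝ) ^ (i : ℕ) * f (fun j => z (i.succAbove j))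

open Classical in
/-- Number of distinct first coordinates of a tuple in `S¹ × S¹`. -/
noncomputable def ncard₁ {n : ℕ} (z : Fin n → Circle × Circle) : ℕ :=
  (Finset.univ.image fun i => (z i).1).card

open Classical in
/-- Number of distinct second coordinates of a tuple in `S¹ × S¹`. -/
noncomputable def ncard₂ {n : ℕ} (z : Fin n → Circle × Circle) : ℕ :=
  (Finset.univ.image fun i => (z i).2).card

/-!
A 4-tuple in `S¹ × S¹` whose first coordinates span crossing chords `x₀x₂, x₁x₃` and whose
second coordinates span disjoint chords `y₀y₂, y₁y₃` is mapped to itself, up to the even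
permutation `(0 2)(1 3)`, by the pair (half-turn of `ℍ²` about the crossing point, reflection of
`ℍ²` in the common perpendicular). That pair has orientation sign `-1`, so invariance and
alternation give `b = -b` on such tuples. Every face of the extremal tuple `w` is of this kind,
and `Θ(w) = 2/3` is a finite count of orientation signs.
-/

open ComplexConjugate

theorem Real.sign_mul (x y : ℝ) : Real.sign (x * y) = Real.sign x * Real.sign y := by
  have h (r : ℝ) : Real.sign r = (SignType.sign r : ℝ) := by
    rcases lt_trichotomy r 0 with hr | rfl | hr
    · simp [Real.sign_of_neg hr, hr]
    · simp [Real.sign_zero]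
    · simp [Real.sign_of_pos hr, hr]
  rw [h, h, h, _root_.sign_mul, SignType.coe_mul]

theorem eq_zero_of_antisymm_of_eq_zero_of_lt {α : Type*} [LinearOrder α] {f : α → α → α → ℝ}
    (h₁₂ : ∀ i j k, f j i k = -f i j k) (h₂₃ : ∀ i j k, f i k j = -f i j k)
    (hlt : ∀ i j k, i < j → j < k → f i j k = 0) (i j k : α) : f i j k = 0 := by
  have hle : ∀ i j k, i ≤ j → j ≤ k → f i j k = 0 := by
    intro i j k hij hjk
    rcases hij.lt_or_eq with hij | rfl
    · rcases hjk.lt_or_eq with hjk | rfl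
      · exact hlt i j k hij hjk
      · linarith [h₂₃ i j j]
    · linarith [h₁₂ i i k]
  rcases le_total i j with hij | hij <;> rcases le_total j k with hjk | hjk <;>
    rcases le_total i k with hik | hik
  all_goals first
    | exact hle i j k ‹_› ‹_›
    | linarith [hle i k j ‹_› ‹_›, h₂₃ i k j]
    | linarith [hle j i k ‹_› ‹_›, h₁₂ j i k]
    | linarith [hle k i j ‹_› ‹_›, h₁₂ i k j, h₂₃ i k j]
    | linarith [hle j k i ‹_› ‹_›, h₂₃ j k i, h₁₂ i j k]
    | linarith [hle k j i ‹_› ‹_›, h₁₂ i j k, h₂₃ j i k, h₁₂ j k i]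

noncomputable def orientDet (a b c : Circle) : ℝ :=
  (conj ((b : ℂ) - a) * ((c : ℂ) - a)).im

theorem orient_eq_sign_orientDet (a b c : Circle) : orient a b c = Real.sign (orientDet a b c) :=
  rfl

theorem orient_swap₁₂ (a b c : Circle) : orient b a c = -orient a b c := by
  rw [orient_eq_sign_orientDet, orient_eq_sign_orientDet, ← Real.sign_neg, orientDet, orientDet]
  congr 1
  simp only [Complex.mul_im, map_sub, Complex.sub_re, Complex.sub_im, Complex.conj_re,
    Complex.conj_im]
  ring

theorem orient_swap₂₃ (a b c : Circle) : orient a c b = -orient a b c := by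
  rw [orient_eq_sign_orientDet, orient_eq_sign_orientDet, ← Real.sign_neg, orientDet, orientDet]
  congr 1
  simp only [Complex.mul_im, map_sub, Complex.sub_re, Complex.sub_im, Complex.conj_re,
    Complex.conj_im]
  ring

def orderSign {n : ℕ} (i j k : Fin n) : ℤ :=
  Int.sign (((j : ℤ) - i) * ((k : ℤ) - j) * ((k : ℤ) - i))

theorem orderSign_swap₁₂ {n : ℕ} (i j k : Fin n) : orderSign j i k = -orderSign i j k := by
  rw [orderSign, orderSign, ← Int.sign_neg]
  congr 1
  ring

theorem orderSign_swap₂₃ {n : ℕ} (i j k : Fin n) : orderSign i k j = -orderSign i j k := by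
  rw [orderSign, orderSign, ← Int.sign_neg]
  congr 1
  ring

theorem orderSign_of_lt {n : ℕ} {i j k : Fin n} (hij : i < j) (hjk : j < k) :
    orderSign i j k = 1 := by
  have hij' : (i : ℤ) < j := by exact_mod_cast hij
  have hjk' : (j : ℤ) < k := by exact_mod_cast hjk
  exact Int.sign_eq_one_of_pos (by nlinarith [mul_pos (sub_pos.2 hij') (sub_pos.2 hjk')])

theorem PosCyclicallyOrdered.orient_eq {n : ℕ} {x : Fin n → Circle}
    (hx : PosCyclicallyOrdered x) (i j k : Fin n) :
    orient (x i) (x j) (x k) = orderSign i j k := by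
  refine sub_eq_zero.1 (eq_zero_of_antisymm_of_eq_zero_of_lt
    (f := fun i j k => orient (x i) (x j) (x k) - orderSign i j k) ?_ ?_ ?_ i j k)
  · intro i j k
    rw [orient_swap₁₂, orderSign_swap₁₂]
    push_cast
    ring
  · intro i j k
    rw [orient_swap₂₃, orderSign_swap₂₃]
    push_cast
    ring
  · intro i j k hij hjk
    simp [hx i j k hij hjk, orderSign_of_lt hij hjk]

theorem Circle.conj_coe (z : Circle) : conj (z : ℂ) = (z : ℂ)⁻¹ := by
  rw [← Circle.coe_inv_eq_conj, Circle.coe_inv]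

theorem mobius_eq_of_mul_add_eq {a b z w : ℂ} (hab : Complex.normSq a ≠ Complex.normSq b)
    (hz : ‖z‖ = 1) (h : a * z + b = w * (conj b * z + conj a)) :
    (a * z + b) / (conj b * z + conj a) = w := by
  have hden : conj b * z + conj a ≠ 0 := by
    intro h0
    have : ‖b‖ = ‖a‖ := by
      simpa [norm_mul, hz] using congrArg norm (eq_neg_of_add_eq_zero_left h0)
    exact hab (by rw [Complex.normSq_eq_norm_sq, Complex.normSq_eq_norm_sq, this])
  rw [h, mul_div_cancel_right₀ _ hden]

theorem normSq_div_sqrt_sub_normSq_div_sqrt {a b : ℂ}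
    (hab : Complex.normSq b < Complex.normSq a) :
    Complex.normSq (a / √(Complex.normSq a - Complex.normSq b)) -
      Complex.normSq (b / √(Complex.normSq a - Complex.normSq b)) = 1 := by
  have hpos := sub_pos.2 hab
  rw [Complex.normSq_div, Complex.normSq_div, Complex.normSq_ofReal,
    Real.mul_self_sqrt hpos.le, ← sub_div, div_self hpos.ne']

namespace DiskIsom

theorem applyS_eq_of_apply_eq (g : DiskIsom) {z w : Circle} (h : g.apply z = w) :
    g.applyS z = w := by
  rw [applyS, h, Circle.exp_arg]

theorem exists_pres_applyS_eq {a b : ℂ} (hab : Complex.normSq b < Complex.normSq a) :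
    ∃ g : DiskIsom, g.pres = true ∧
      ∀ z w : Circle, a * z + b = w * (conj b * z + conj a) → g.applyS z = w := by
  set c : ℝ := √(Complex.normSq a - Complex.normSq b)
  have hc : (c : ℂ) ≠ 0 := Complex.ofReal_ne_zero.2 (Real.sqrt_pos.2 (sub_pos.2 hab)).ne'
  refine ⟨⟨a / c, b / c, normSq_div_sqrt_sub_normSq_div_sqrt hab, true⟩, rfl, fun z w h => ?_⟩
  refine applyS_eq_of_apply_eq _ ?_
  rw [← mobius_eq_of_mul_add_eq hab.ne' (Circle.norm_coe z) h]
  simp only [apply, if_true, map_div₀, Complex.conj_ofReal]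
  field_simp

theorem exists_rev_applyS_eq {a b : ℂ} (hab : Complex.normSq a < Complex.normSq b) :
    ∃ g : DiskIsom, g.pres = false ∧
      ∀ z w : Circle, a * z + b = w * (conj b * z + conj a) → g.applyS z = w := by
  set c : ℝ := √(Complex.normSq b - Complex.normSq a)
  have hc : (c : ℂ) ≠ 0 := Complex.ofReal_ne_zero.2 (Real.sqrt_pos.2 (sub_pos.2 hab)).ne'
  refine ⟨⟨b / c, a / c, normSq_div_sqrt_sub_normSq_div_sqrt hab, false⟩, rfl, fun z w h => ?_⟩
  refine applyS_eq_of_apply_eq _ ?_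
  rw [← mobius_eq_of_mul_add_eq hab.ne (Circle.norm_coe z) h]
  have hz := Circle.coe_ne_zero z
  -- on the circle `conj z = z⁻¹`, so `(b z̄ + a) / (ā z̄ + b̄) = (a z + b) / (b̄ z + ā)`
  simp only [apply, Bool.false_eq_true, if_false, map_div₀, Complex.conj_ofReal,
    Circle.conj_coe]
  field_simp
  ring

theorem exists_sgn_eq_sign_applyS_eq {a b : ℂ} (hab : Complex.normSq a ≠ Complex.normSq b) :
    ∃ g : DiskIsom, g.sgn = Real.sign (Complex.normSq a - Complex.normSq b) ∧
      ∀ z w : Circle, a * z + b = w * (conj b * z + conj a) → g.applyS z = w := by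
  rcases hab.lt_or_gt with hab | hab
  · obtain ⟨g, hg, hgz⟩ := exists_rev_applyS_eq hab
    exact ⟨g, by rw [sgn, hg, Real.sign_of_neg (sub_neg.2 hab)]; rfl, hgz⟩
  · obtain ⟨g, hg, hgz⟩ := exists_pres_applyS_eq hab
    exact ⟨g, by rw [sgn, hg, Real.sign_of_pos (sub_pos.2 hab)]; rfl, hgz⟩

end DiskIsom

/-- `z ↦ (swapA * z + swapB) / (swapC * z - swapA)` is the Möbius involution exchanging
`p ↔ r` and `q ↔ s`. -/
def swapA (p q r s : ℂ) : ℂ := p * r - q * s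

def swapB (p q r s : ℂ) : ℂ := p * q * (s - r) + r * s * (q - p)

def swapC (p q r s : ℂ) : ℂ := p + r - q - s

theorem swapA_mul_add_swapB (p q r s : ℂ) :
    swapA p q r s * p + swapB p q r s = r * (swapC p q r s * p - swapA p q r s) ∧
    swapA p q r s * q + swapB p q r s = s * (swapC p q r s * q - swapA p q r s) ∧
    swapA p q r s * r + swapB p q r s = p * (swapC p q r s * r - swapA p q r s) ∧
    swapA p q r s * s + swapB p q r s = q * (swapC p q r s * s - swapA p q r s) := by
  simp only [swapA, swapB, swapC]
  exact ⟨by ring, by ring, by ring, by ring⟩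

section UnitCircle

variable (p q r s : Circle)

theorem conj_swapA : conj (swapA p q r s) = -swapA p q r s * ↑(p * q * r * s)⁻¹ := by
  have := p.coe_ne_zero; have := q.coe_ne_zero; have := r.coe_ne_zero; have := s.coe_ne_zero
  simp only [swapA, map_sub, map_mul, Circle.conj_coe, Circle.coe_inv, Circle.coe_mul]
  field_simp
  ring

theorem conj_swapB : conj (swapB p q r s) = swapC p q r s * ↑(p * q * r * s)⁻¹ := by
  have := p.coe_ne_zero; have := q.coe_ne_zero; have := r.coe_ne_zero; have := s.coe_ne_zero
  simp only [swapB, swapC, map_add, map_sub, map_mul, Circle.conj_coe, Circle.coe_inv,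
    Circle.coe_mul]
  field_simp
  ring

theorem normSq_swapA_sub_normSq_swapB_mul :
    (Complex.normSq (swapA p q r s) - Complex.normSq (swapB p q r s)) *
        Complex.normSq ((r : ℂ) - p) = 4 * orientDet p q r * orientDet p r s := by
  have := p.coe_ne_zero; have := q.coe_ne_zero; have := r.coe_ne_zero; have := s.coe_ne_zero
  apply Complex.ofReal_injective
  push_cast
  simp only [← Complex.mul_conj, orientDet, Complex.im_eq_sub_conj, swapA, swapB, map_sub,
    map_add, map_mul, map_inv₀, Circle.conj_coe, inv_inv]
  field_simp
  ring_nf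
  simp only [Complex.I_sq]
  ring

end UnitCircle

/-- Rescaled by a square root of `(p q r s)⁻¹`, the involution exchanging `p ↔ r`, `q ↔ s` takes
the form `z ↦ (a z + b) / (b̄ z + ā)`, and the sign of `|a|² - |b|²` is the crossing sign of the
chords `pr` and `qs`: `g` is a half-turn if they cross and a reflection otherwise. -/
theorem exists_diskIsom_swap (p q r s : Circle) (h : orient p q r * orient p r s ≠ 0) :
    ∃ g : DiskIsom, g.sgn = orient p q r * orient p r s ∧
      g.applyS p = r ∧ g.applyS q = s ∧ g.applyS r = p ∧ g.applyS s = q := by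
  obtain ⟨ω, hω⟩ : ∃ ω : Circle, ω * ω = (p * q * r * s)⁻¹ :=
    ⟨Circle.exp (Complex.arg ↑(p * q * r * s)⁻¹ / 2), by rw [← Circle.exp_add, add_halves,
      Circle.exp_arg]⟩
  set a : ℂ := ω * swapA p q r s
  set b : ℂ := ω * swapB p q r s
  have hω₀ := ω.coe_ne_zero
  have ha : conj a = -(ω * swapA p q r s) := by
    rw [map_mul, conj_swapA, Circle.conj_coe, ← hω, Circle.coe_mul]
    field_simp
  have hb : conj b = ω * swapC p q r s := by
    rw [map_mul, conj_swapB, Circle.conj_coe, ← hω, Circle.coe_mul]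
    field_simp
  have hdet : (Complex.normSq a - Complex.normSq b) * Complex.normSq ((r : ℂ) - p) =
      4 * orientDet p q r * orientDet p r s := by
    simp only [a, b, Complex.normSq_mul, Circle.normSq_coe, one_mul,
      normSq_swapA_sub_normSq_swapB_mul]
  have hsign : Real.sign (Complex.normSq a - Complex.normSq b) = orient p q r * orient p r s := by
    have hN : 0 < Complex.normSq ((r : ℂ) - p) := by
      refine (Complex.normSq_nonneg _).lt_of_ne' fun hN => h ?_
      rw [orient_eq_sign_orientDet, orient_eq_sign_orientDet, ← Real.sign_mul,
        Real.sign_eq_zero_iff]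
      rw [hN, mul_zero] at hdet
      linarith
    have := congrArg Real.sign hdet
    simp only [Real.sign_mul, Real.sign_of_pos hN, Real.sign_of_pos four_pos] at this
    rw [orient_eq_sign_orientDet, orient_eq_sign_orientDet]
    linarith
  have hab : Complex.normSq a ≠ Complex.normSq b := fun hab => h <| by
    rw [← hsign, hab, sub_self, Real.sign_zero]
  obtain ⟨g, hg, hgz⟩ := DiskIsom.exists_sgn_eq_sign_applyS_eq hab
  have hmaps : ∀ z w : Circle, swapA p q r s * z + swapB p q r s =
      w * (swapC p q r s * z - swapA p q r s) → g.applyS z = w := fun z w hzw =>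
    hgz z w (by rw [ha, hb]; linear_combination (ω : ℂ) * hzw)
  obtain ⟨hp, hq, hr, hs⟩ := swapA_mul_add_swapB p q r s
  exact ⟨g, hg.trans hsign, hmaps _ _ hp, hmaps _ _ hq, hmaps _ _ hr, hmaps _ _ hs⟩

theorem Alternating.eq_zero_of_orient_mul_eq_neg_one {b : (Fin 4 → Circle × Circle) → ℝ}
    (halt : Alternating b) (hinv : HInvariant b) (x y : Fin 4 → Circle)
    (h : orient (x 0) (x 1) (x 2) * orient (x 0) (x 2) (x 3) *
      (orient (y 0) (y 1) (y 2) * orient (y 0) (y 2) (y 3)) = -1) :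
    b (fun i => (x i, y i)) = 0 := by
  have hne := h.trans_ne (by norm_num : (-1 : ℝ) ≠ 0)
  obtain ⟨g, hg, hg0, hg1, hg2, hg3⟩ :=
    exists_diskIsom_swap (x 0) (x 1) (x 2) (x 3) (left_ne_zero_of_mul hne)
  obtain ⟨k, hk, hk0, hk1, hk2, hk3⟩ :=
    exists_diskIsom_swap (y 0) (y 1) (y 2) (y 3) (right_ne_zero_of_mul hne)
  set σ : Equiv.Perm (Fin 4) := Equiv.swap 0 2 * Equiv.swap 1 3
  have hσ : (fun i => (g.applyS (x i), k.applyS (y i))) = fun i => (x (σ i), y (σ i)) := by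
    ext i <;> fin_cases i <;>
      simp [σ, Equiv.swap_apply_of_ne_of_ne, hg0, hg1, hg2, hg3, hk0, hk1, hk2, hk3]
  have hperm : b (fun i => (x (σ i), y (σ i))) = b fun i => (x i, y i) := by
    simpa [show Equiv.Perm.sign σ = 1 by decide] using halt σ fun i => (x i, y i)
  have := hinv.1 g k fun i => (x i, y i)
  rw [hσ, hperm, hg, hk, h] at this
  linarith

def extremalPerm : Fin 5 → Fin 5 := ![0, 2, 4, 1, 3]

def extremalTuple (x y : Fin 5 → Circle) : Fin 5 → Circle × Circle :=
  fun i => (x i, y (extremalPerm i))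

theorem cobdry_extremalTuple {b : (Fin 4 → Circle × Circle) → ℝ} (halt : Alternating b)
    (hinv : HInvariant b) {x y : Fin 5 → Circle} (hx : PosCyclicallyOrdered x)
    (hy : PosCyclicallyOrdered y) : cobdry b (extremalTuple x y) = 0 := by
  -- every face has crossing `x`-chords and disjoint `y`-chords
  have hfaces : ∀ i : Fin 5, orderSign (i.succAbove 0) (i.succAbove 1) (i.succAbove 2) *
      orderSign (i.succAbove 0) (i.succAbove 2) (i.succAbove 3) *
      (orderSign (extremalPerm (i.succAbove 0)) (extremalPerm (i.succAbove 1))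
          (extremalPerm (i.succAbove 2)) *
        orderSign (extremalPerm (i.succAbove 0)) (extremalPerm (i.succAbove 2))
          (extremalPerm (i.succAbove 3))) = -1 := by
    decide
  refine Finset.sum_eq_zero fun i _ => mul_eq_zero_of_right _ ?_
  refine halt.eq_zero_of_orient_mul_eq_neg_one hinv (fun j => x (i.succAbove j))
    (fun j => y (extremalPerm (i.succAbove j))) ?_
  simp only [hx.orient_eq, hy.orient_eq]
  exact_mod_cast hfaces i

set_option maxRecDepth 4000 in
theorem Theta_extremalTuple {x y : Fin 5 → Circle} (hx : PosCyclicallyOrdered x)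
    (hy : PosCyclicallyOrdered y) : Theta (extremalTuple x y) = 2 / 3 := by
  have hsum : ∑ σ : Equiv.Perm (Fin 5), (Equiv.Perm.sign σ : ℤ) *
      (orderSign (σ 0) (σ 1) (σ 2) * orderSign (extremalPerm (σ 2))
        (extremalPerm (σ 3)) (extremalPerm (σ 4))) = 80 := by
    decide
  simp only [Theta, extremalTuple, hx.orient_eq, hy.orient_eq]
  have hsumℝ := congrArg (Int.cast : ℤ → ℝ) hsum
  push_cast at hsumℝ
  rw [hsumℝ]
  norm_num

theorem coboundary_vanishes_on_extremal_tuple_general (b : (Fin 4 → Circle × Circle) → ℝ)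
    (halt : Alternating b) (hinv : HInvariant b)
    (x y : Fin 5 → Circle)
    (hx : PosCyclicallyOrdered x) (hy : PosCyclicallyOrdered y) :
    cobdry b ![(x 0, y 0), (x 1, y 2), (x 2, y 4), (x 3, y 1), (x 4, y 3)] = 0 ∧
      (∀ C : ℝ, (∀ z : Fin 5 → Circle × Circle, |Theta z + cobdry b z| ≤ C) → 2 / 3 ≤ C) := by
  have hw : ![(x 0, y 0), (x 1, y 2), (x 2, y 4), (x 3, y 1), (x 4, y 3)] = extremalTuple x y := by
    ext i <;> fin_cases i <;> rfl
  have hcob := cobdry_extremalTuple halt hinv hx hy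
  refine ⟨hw ▸ hcob, fun C hC => ?_⟩
  simpa [hcob, Theta_extremalTuple hx hy, abs_of_pos] using hC (extremalTuple x y)

/-- For every alternating, bounded, `H`-invariant 3-cochain `b` the coboundary `δb`
vanishes on the extremal 5-tuple `w = ((x₀,y₀),(x₁,y₂),(x₂,y₄),(x₃,y₁),(x₄,y₃))`,
hence `‖Θ + δb‖_∞ ≥ 2/3`: the seminorm of the bounded cohomology class of `Θ`
equals `2/3`. -/
theorem coboundary_vanishes_on_extremal_tuple (b : (Fin 4 → Circle × Circle) → ℝ)
    (halt : Alternating b) (hinv : HInvariant b)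
    (hbdd : ∃ C : ℝ, ∀ z : Fin 4 → Circle × Circle, |b z| ≤ C)
    (x y : Fin 5 → Circle)
    (hx : PosCyclicallyOrdered x) (hy : PosCyclicallyOrdered y) :
    cobdry b ![(x 0, y 0), (x 1, y 2), (x 2, y 4), (x 3, y 1), (x 4, y 3)] = 0 ∧
      (∀ C : ℝ, (∀ z : Fin 5 → Circle × Circle, |Theta z + cobdry b z| ≤ C) → 2 / 3 ≤ C) :=
  coboundary_vanishes_on_extremal_tuple_general b halt hinv x y hx hy
end

section
/- Let f : (S¹×S¹)⁵ → ℝ be an alternating, bounded, H-invariant (twisted orientation-sign action) cocycle, and define h₁ : (S¹×S¹)⁴ → ℝ by h₁((x₁,y₁),…,(x₄,y₄)) = f((xᵢ,yⱼ),(x₁,y₁),…,(x₄,y₄)) if there exist i ≠ i′ and j ≠ j′ with xᵢ = x_{i′} and yⱼ = y_{j′}, and h₁ = 0 otherwise. Then h₁ is well defined (independent of the choice of such indices), alternating, bounded, and H-invariant. -/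
/-! Since `f` is alternating, `f ((a, b), z)` vanishes when `(a, b)` is an entry of `z` or when `z`
has a repeated entry. If `z` has no repeated entry but two different repeated first coordinates,
the two index pairs realising them partition the four indices, so any repeated second coordinate
already occurs in an entry of `z` next to either repeated first coordinate, and every candidate
value of `h₁` is `0`. Otherwise the repeated first coordinate is unique, and symmetrically the
second one, so the prepended point does not depend on the indices. Invariance follows because
permutations, product isometries (injective on `S¹`) and the factor swap carry degeneracy
witnesses to degeneracy witnesses. -/


open scoped BigOperators

/-- The degeneracy condition in the definition of `h₁`. -/
def H1Degenerate (z : Fin 4 → Circle × Circle) : Prop :=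
  ∃ i i' j j' : Fin 4, i ≠ i' ∧ j ≠ j' ∧ (z i).1 = (z i').1 ∧ (z j).2 = (z j').2

/-- The 5-tuple `((xᵢ,yⱼ), z₁, …, z₄)` obtained by prepending `(xᵢ,yⱼ)` to `z`. -/
def extendTuple (z : Fin 4 → Circle × Circle) (i j : Fin 4) : Fin 5 → Circle × Circle :=
  Fin.cons ((z i).1, (z j).2) z

open Classical in
/-- The cochain `h₁` associated to `f`. -/
noncomputable def h1 (f : (Fin 5 → Circle × Circle) → ℝ)
    (z : Fin 4 → Circle × Circle) : ℝ :=
  if h : H1Degenerate z then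
    f (extendTuple z h.choose h.choose_spec.choose_spec.choose)
  else 0

namespace DiskIsom

variable (g : DiskIsom)

lemma mul_conj_a_sub_mul_conj_b : g.a * (starRingEnd ℂ) g.a - g.b * (starRingEnd ℂ) g.b = 1 := by
  rw [Complex.mul_conj, Complex.mul_conj]
  exact_mod_cast g.hnorm

lemma norm_b_lt_norm_a : ‖g.b‖ < ‖g.a‖ := by
  have h : Complex.normSq g.b < Complex.normSq g.a := by linarith [g.hnorm]
  simpa [Complex.norm_def] using Real.sqrt_lt_sqrt (Complex.normSq_nonneg _) h

lemma denom_ne_zero {ζ : ℂ} (hζ : ‖ζ‖ = 1) :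
    (starRingEnd ℂ) g.b * ζ + (starRingEnd ℂ) g.a ≠ 0 := by
  intro h
  have h' := congrArg (‖·‖) (eq_neg_of_add_eq_zero_right h)
  simp only [norm_neg, norm_mul, Complex.norm_conj, hζ, mul_one] at h'
  exact g.norm_b_lt_norm_a.ne' h'

/-- On the unit circle the numerator is `ζ` times the conjugate of the denominator. -/
lemma norm_numer_eq_norm_denom {ζ : ℂ} (hζ : ‖ζ‖ = 1) :
    ‖g.a * ζ + g.b‖ = ‖(starRingEnd ℂ) g.b * ζ + (starRingEnd ℂ) g.a‖ := by
  have hζζ : ζ * (starRingEnd ℂ) ζ = 1 := by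
    rw [Complex.mul_conj, Complex.normSq_eq_norm_sq, hζ]; norm_num
  have h : g.a * ζ + g.b = ζ * (starRingEnd ℂ) ((starRingEnd ℂ) g.b * ζ + (starRingEnd ℂ) g.a) := by
    simp only [map_add, map_mul, Complex.conj_conj]
    linear_combination -g.b * hζζ
  rw [h, norm_mul, Complex.norm_conj, hζ, one_mul]

lemma norm_apply_coe (x : Circle) : ‖g.apply x‖ = 1 := by
  have hζ : ‖if g.pres then (x : ℂ) else (starRingEnd ℂ) x‖ = 1 := by
    split_ifs
    · exact Circle.norm_coe x
    · exact (Complex.norm_conj _).trans (Circle.norm_coe x)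
  rw [apply, norm_div, g.norm_numer_eq_norm_denom hζ,
    div_self (norm_ne_zero_iff.mpr (g.denom_ne_zero hζ))]

lemma coe_applyS (x : Circle) : (g.applyS x : ℂ) = g.apply x := by
  simpa [applyS, Circle.coe_exp, g.norm_apply_coe x] using
    Complex.norm_mul_exp_arg_mul_I (g.apply x)

/-- Cross-multiplying turns `(aζ+b)/(b̄ζ+ā) = (aη+b)/(b̄η+ā)` into `(|a|²-|b|²)(ζ-η) = 0`. -/
lemma eq_of_mobius_eq {ζ η : ℂ} (hζ : ‖ζ‖ = 1) (hη : ‖η‖ = 1)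
    (h : (g.a * ζ + g.b) / ((starRingEnd ℂ) g.b * ζ + (starRingEnd ℂ) g.a) =
      (g.a * η + g.b) / ((starRingEnd ℂ) g.b * η + (starRingEnd ℂ) g.a)) :
    ζ = η := by
  rw [div_eq_div_iff (g.denom_ne_zero hζ) (g.denom_ne_zero hη)] at h
  linear_combination h - (ζ - η) * g.mul_conj_a_sub_mul_conj_b

lemma applyS_injective : Function.Injective g.applyS := by
  intro x y hxy
  have h : g.apply x = g.apply y := by rw [← coe_applyS, ← coe_applyS, hxy]
  apply Subtype.ext
  unfold apply at h
  split_ifs at h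
  · exact g.eq_of_mobius_eq (Circle.norm_coe x) (Circle.norm_coe y) h
  · refine (starRingEnd ℂ).injective (g.eq_of_mobius_eq ?_ ?_ h) <;>
      exact (Complex.norm_conj _).trans (Circle.norm_coe _)

end DiskIsom

namespace Alternating

variable {n : ℕ} {X : Type*} {f : (Fin n → X) → ℝ}

lemma comp {Y : Type*} (hf : Alternating f) (φ : Y → X) : Alternating fun w => f (φ ∘ w) :=
  fun σ z => hf σ (φ ∘ z)

lemma apply_eq_zero_of_eq (hf : Alternating f) {w : Fin n → X} {t s : Fin n} (hts : t ≠ s)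
    (h : w t = w s) : f w = 0 := by
  have hw : (fun i => w (Equiv.swap t s i)) = w := by
    rw [← Function.comp_def, Equiv.comp_swap_eq_update, h, Function.update_eq_self,
      ← h, Function.update_eq_self]
  have := hf (Equiv.swap t s) w
  rw [hw, Equiv.Perm.sign_swap hts] at this
  push_cast at this
  linarith

lemma apply_eq_zero_of_not_injective (hf : Alternating f) {w : Fin n → X}
    (hw : ¬Function.Injective w) : f w = 0 := by
  obtain ⟨t, s, h, hts⟩ := Function.not_injective_iff.mp hw
  exact hf.apply_eq_zero_of_eq hts h

end Alternating

/-- `{i, i'}` and `{k, k'}` partition `Fin 4`, so a pair other than `{k, k'}` meets `{i, i'}`. -/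
lemma Fin.exists_mem_pair_of_ne_pair : ∀ i i' k k' j j' : Fin 4, i ≠ i' → k ≠ k' → i ≠ k →
    i ≠ k' → i' ≠ k → i' ≠ k' → j ≠ j' → ¬(j = k ∧ j' = k' ∨ j = k' ∧ j' = k) →
    ∃ t, (t = i ∨ t = i') ∧ (t = j ∨ t = j') := by
  decide

section PairTuples

variable {α β : Type*} {f : (Fin 5 → α × β) → ℝ} {z : Fin 4 → α × β} {i i' j j' k k' : Fin 4}

/-- Without repeated entries in `z`, the index pair of the repeated second coordinate meets
`{i, i'}`, so the prepended point is already an entry of `z`. -/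
lemma apply_cons_eq_zero_of_fst_ne (hf : Alternating f) (hi : i ≠ i') (hk : k ≠ k')
    (hj : j ≠ j') (hxi : (z i).1 = (z i').1) (hxk : (z k).1 = (z k').1)
    (hyj : (z j).2 = (z j').2) (hik : (z i).1 ≠ (z k).1) :
    f (Fin.cons ((z i).1, (z j).2) z) = 0 := by
  by_cases hz : Function.Injective z
  swap
  · exact hf.apply_eq_zero_of_not_injective fun h => hz (Fin.cons_injective_iff.mp h).2
  have hjk : ¬(j = k ∧ j' = k' ∨ j = k' ∧ j' = k) := by
    rintro (⟨rfl, rfl⟩ | ⟨rfl, rfl⟩)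
    · exact hk (hz (Prod.ext hxk hyj))
    · exact hk (hz (Prod.ext hxk hyj.symm))
  obtain ⟨t, hti, htj⟩ := Fin.exists_mem_pair_of_ne_pair i i' k k' j j' hi hk
    (fun h => hik (by rw [h])) (fun h => hik (by rw [h, hxk])) (fun h => hik (by rw [hxi, h]))
    (fun h => hik (by rw [hxi, h, hxk])) hj hjk
  have hzt : z t = ((z i).1, (z j).2) := by
    refine Prod.ext ?_ ?_
    · rcases hti with rfl | rfl <;> simp [hxi]
    · rcases htj with rfl | rfl <;> simp [hyj]
  exact hf.apply_eq_zero_of_eq (t := 0) (s := t.succ) (Fin.succ_ne_zero t).symm (by simp [hzt])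

lemma apply_cons_fst_eq (hf : Alternating f) (hi : i ≠ i') (hk : k ≠ k') (hj : j ≠ j')
    (hxi : (z i).1 = (z i').1) (hxk : (z k).1 = (z k').1) (hyj : (z j).2 = (z j').2) :
    f (Fin.cons ((z i).1, (z j).2) z) = f (Fin.cons ((z k).1, (z j).2) z) := by
  by_cases hik : (z i).1 = (z k).1
  · rw [hik]
  · rw [apply_cons_eq_zero_of_fst_ne hf hi hk hj hxi hxk hyj hik,
      apply_cons_eq_zero_of_fst_ne hf hk hi hj hxk hxi hyj (Ne.symm hik)]

lemma apply_cons_snd_eq (hf : Alternating f) (hi : i ≠ i') (hj : j ≠ j') (hk : k ≠ k')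
    (hxi : (z i).1 = (z i').1) (hyj : (z j).2 = (z j').2) (hyk : (z k).2 = (z k').2) :
    f (Fin.cons ((z i).1, (z j).2) z) = f (Fin.cons ((z i).1, (z k).2) z) := by
  simpa [Fin.comp_cons, ← Function.comp_assoc, Prod.swap_swap_eq] using
    apply_cons_fst_eq (hf.comp Prod.swap) (z := Prod.swap ∘ z) hj hk hi hyj hyk hxi

end PairTuples

section H1

variable {f : (Fin 5 → Circle × Circle) → ℝ}

lemma h1_eq_of_degenerate (hf : Alternating f) {z : Fin 4 → Circle × Circle} {i i' j j' : Fin 4}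
    (hi : i ≠ i') (hj : j ≠ j') (hx : (z i).1 = (z i').1) (hy : (z j).2 = (z j').2) :
    h1 f z = f (extendTuple z i j) := by
  have hz : H1Degenerate z := ⟨i, i', j, j', hi, hj, hx, hy⟩
  obtain ⟨hk, hl, hxk, hyl⟩ := hz.choose_spec.choose_spec.choose_spec.choose_spec
  rw [h1, dif_pos hz, extendTuple, extendTuple, apply_cons_fst_eq hf hk hi hl hxk hx hyl,
    apply_cons_snd_eq hf hi hl hj hx hyl hy]

lemma abs_h1_le {C : ℝ} (hC : ∀ z, |f z| ≤ C) (z : Fin 4 → Circle × Circle) : |h1 f z| ≤ C := by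
  unfold h1
  split_ifs
  · exact hC _
  · simpa using (abs_nonneg _).trans (hC fun _ => 1)

lemma h1_eq_mul_of_extendTuple_eq (hf : Alternating f)
    {F : (Fin 5 → Circle × Circle) → Fin 5 → Circle × Circle} {c : ℝ}
    (hF : ∀ v, f (F v) = c * f v) {z w : Fin 4 → Circle × Circle}
    (hdeg : H1Degenerate w → H1Degenerate z)
    (hext : ∀ i i' j j', i ≠ i' → j ≠ j' → (z i).1 = (z i').1 → (z j).2 = (z j').2 →
      ∃ k k' l l', k ≠ k' ∧ l ≠ l' ∧ (w k).1 = (w k').1 ∧ (w l).2 = (w l').2 ∧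
        extendTuple w k l = F (extendTuple z i j)) :
    h1 f w = c * h1 f z := by
  by_cases hz : H1Degenerate z
  · obtain ⟨i, i', j, j', hi, hj, hx, hy⟩ := hz
    obtain ⟨k, k', l, l', hk, hl, hxk, hyl, he⟩ := hext i i' j j' hi hj hx hy
    rw [h1_eq_of_degenerate hf hk hl hxk hyl, he, hF, h1_eq_of_degenerate hf hi hj hx hy]
  · rw [h1, h1, dif_neg hz, dif_neg (mt hdeg hz), mul_zero]

lemma Alternating.h1 (hf : Alternating f) : Alternating (h1 f) := by
  intro σ z
  let τ : Equiv.Perm (Fin 5) := Equiv.Perm.decomposeFin.symm (0, σ)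
  refine h1_eq_mul_of_extendTuple_eq hf (F := fun v m => v (τ m)) (fun v => ?_) ?_ ?_
  · simp [τ, hf τ v, Equiv.Perm.decomposeFin.symm_sign]
  · rintro ⟨i, i', j, j', hi, hj, hx, hy⟩
    exact ⟨σ i, σ i', σ j, σ j', σ.injective.ne hi, σ.injective.ne hj, hx, hy⟩
  · intro i i' j j' hi hj hx hy
    refine ⟨σ.symm i, σ.symm i', σ.symm j, σ.symm j', by simpa, by simpa, by simpa, by simpa, ?_⟩
    funext m
    refine Fin.cases ?_ (fun t => ?_) m <;>
      simp [τ, extendTuple, Equiv.Perm.decomposeFin_symm_apply_zero,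
        Equiv.Perm.decomposeFin_symm_apply_succ]

lemma HInvariant.h1 (hf : Alternating f) (hinv : HInvariant f) : HInvariant (h1 f) := by
  constructor
  · intro g h z
    refine h1_eq_mul_of_extendTuple_eq hf (hinv.1 g h) ?_ fun i i' j j' hi hj hx hy =>
      ⟨i, i', j, j', hi, hj, congrArg g.applyS hx, congrArg h.applyS hy, ?_⟩
    · rintro ⟨i, i', j, j', hi, hj, hx, hy⟩
      exact ⟨i, i', j, j', hi, hj, g.applyS_injective hx, h.applyS_injective hy⟩
    · funext m
      cases m using Fin.cases <;> rfl
  · intro z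
    simpa using h1_eq_mul_of_extendTuple_eq hf (c := 1) (by simpa using hinv.2)
      (fun ⟨i, i', j, j', hi, hj, hx, hy⟩ => ⟨j, j', i, i', hj, hi, hy, hx⟩)
      fun i i' j j' hi hj hx hy => ⟨j, j', i, i', hj, hi, hy, hx,
        funext fun m => by cases m using Fin.cases <;> rfl⟩

end H1

theorem h1_well_defined_and_invariant_general (f : (Fin 5 → Circle × Circle) → ℝ)
    (halt : Alternating f) (hbdd : ∃ C : ℝ, ∀ z, |f z| ≤ C) (hinv : HInvariant f) :
    (∀ (z : Fin 4 → Circle × Circle) (i i' j j' : Fin 4), i ≠ i' → j ≠ j' →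
        (z i).1 = (z i').1 → (z j).2 = (z j').2 → h1 f z = f (extendTuple z i j)) ∧
      Alternating (h1 f) ∧ (∃ C : ℝ, ∀ z, |h1 f z| ≤ C) ∧ HInvariant (h1 f) := by
  obtain ⟨C, hC⟩ := hbdd
  exact ⟨fun _ _ _ _ _ => h1_eq_of_degenerate halt, halt.h1, ⟨C, abs_h1_le hC⟩, hinv.h1 halt⟩

/-- `h₁` is well defined (its value does not depend on the choice of indices
witnessing the degeneracy), alternating, bounded and `H`-invariant. -/
theorem h1_well_defined_and_invariant (f : (Fin 5 → Circle × Circle) → ℝ)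
    (halt : Alternating f) (hbdd : ∃ C : ℝ, ∀ z, |f z| ≤ C) (hinv : HInvariant f)
    (hcocycle : ∀ w : Fin 6 → Circle × Circle, cobdry f w = 0) :
    (∀ (z : Fin 4 → Circle × Circle) (i i' j j' : Fin 4), i ≠ i' → j ≠ j' →
        (z i).1 = (z i').1 → (z j).2 = (z j').2 → h1 f z = f (extendTuple z i j)) ∧
      Alternating (h1 f) ∧ (∃ C : ℝ, ∀ z, |h1 f z| ≤ C) ∧ HInvariant (h1 f) :=
  h1_well_defined_and_invariant_general f halt hbdd hinv
end
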